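/- arXiv:2405.21047 — 2 statements merged into one kernel-verified Lean document; each statement's English description precedes it below -/
import Mathlib

section
/- Let S be a finite set of previously sampled strings in L ⊆ Σ^n. Define the ASAp approximation c̃_S by: c̃_S(w_{1:i}) = 1[w_{1:i} ∈ L_prefix] if no string in S has w_{1:i} as a prefix, and otherwise c̃_S(w_{1:i}) = Σ_{a ∈ Σ} P(a | w_{1:i}) · c̃_S(w_{1:i} a) (with c̃_S(w_{1:n}) = 1[w_{1:n} ∈ L] at full length). Then c̃_S(w_{1:i}) ≥ c(w_{1:i}) for every prefix w_{1:i}; i.e., the ASAp approximation soundly overapproximates the expected future grammaticality. -/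
open scoped BigOperators
open Finset Filter

namespace GAD

/-- Marginal probability of the prefix `u` under a distribution `P` on length-`n` strings. -/
noncomputable def marg {α : Type*} [Fintype α] (n : ℕ) (P : List α → ℝ) (u : List α) : ℝ :=
  ∑ v : Fin (n - u.length) → α, P (u ++ List.ofFn v)

/-- Marginal probability mass of completions of `u` that land in the language `L`. -/
noncomputable def margL {α : Type*} [Fintype α] (n : ℕ) (P : List α → ℝ) (L : Set (List α))
    (u : List α) : ℝ :=
  ∑ v : Fin (n - u.length) → α, L.indicator P (u ++ List.ofFn v)

/-- Next-token conditional `P(a | u)`. -/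
noncomputable def cond {α : Type*} [Fintype α] (n : ℕ) (P : List α → ℝ) (u : List α) (a : α) : ℝ :=
  marg n P (u ++ [a]) / marg n P u

/-- Expected future grammaticality `c(u) = Σ_v P(v | u) · 1[u ++ v ∈ L]`. -/
noncomputable def efg {α : Type*} [Fintype α] (n : ℕ) (P : List α → ℝ) (L : Set (List α))
    (u : List α) : ℝ :=
  margL n P L u / marg n P u

/-- `u` is a prefix of some string of the language `L`. -/
def inPrefix {α : Type*} (L : Set (List α)) (u : List α) : Prop := ∃ v, u ++ v ∈ L

/-- Total probability mass of the language: `P(L)`. -/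
noncomputable def PL {α : Type*} [Fintype α] (n : ℕ) (P : List α → ℝ) (L : Set (List α)) : ℝ :=
  margL n P L []

open Classical in
/-- ASAp approximation of expected future grammaticality, with fuel = remaining length. -/
noncomputable def ctildeAux {α : Type*} [Fintype α] (n : ℕ) (P : List α → ℝ) (L : Set (List α))
    (S : Finset (List α)) : ℕ → List α → ℝ
  | 0, u => Set.indicator L (fun _ => (1 : ℝ)) u
  | (k + 1), u =>
      if ∃ s ∈ S, u <+: s then
        ∑ a : α, cond n P u a * ctildeAux n P L S k (u ++ [a])
      else Set.indicator {t | inPrefix L t} (fun _ => (1 : ℝ)) u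

/-- ASAp overapproximation `c̃_S`. -/
noncomputable def ctilde {α : Type*} [Fintype α] (n : ℕ) (P : List α → ℝ) (L : Set (List α))
    (S : Finset (List α)) (u : List α) : ℝ :=
  ctildeAux n P L S (n - u.length) u

/-! Induction on the remaining length. On a prefix of a string of `S`, `c̃_S` follows the chain rule
`c(u) = Σₐ P(a | u) c(ua)` of `c`, whose weights are nonnegative; elsewhere it is the indicator of
`L_prefix`, which dominates `c` because `c ≤ 1` and `c` vanishes off `L_prefix`. -/

section

variable {α : Type*} [Fintype α] {n : ℕ} {P : List α → ℝ} {L : Set (List α)}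

theorem sum_ofFn_succ {M : Type*} [AddCommMonoid M] (m : ℕ) (Q : List α → M) (u : List α) :
    ∑ v : Fin (m + 1) → α, Q (u ++ List.ofFn v)
      = ∑ a : α, ∑ v : Fin m → α, Q (u ++ [a] ++ List.ofFn v) := by
  rw [← (Fin.consEquiv fun _ => α).sum_comp, Fintype.sum_prod_type]
  simp [Fin.consEquiv, List.ofFn_succ]

theorem marg_nonneg (hP : ∀ w, 0 ≤ P w) (u : List α) : 0 ≤ marg n P u :=
  sum_nonneg fun _ _ => hP _

theorem margL_le_marg (hP : ∀ w, 0 ≤ P w) (u : List α) : margL n P L u ≤ marg n P u :=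
  sum_le_sum fun _ _ => Set.indicator_apply_le' (fun _ => le_rfl) fun _ => hP _

theorem marg_eq_sum_marg_append {u : List α} (hu : u.length < n) :
    marg n P u = ∑ a : α, marg n P (u ++ [a]) := by
  obtain ⟨m, hm⟩ : ∃ m, n - u.length = m + 1 := ⟨n - u.length - 1, by omega⟩
  have hm' (a : α) : n - (u ++ [a]).length = m := by simp; omega
  unfold marg
  rw [hm, sum_ofFn_succ]
  refine sum_congr rfl fun a _ => ?_
  rw [hm' a]

theorem margL_eq_sum_margL_append {u : List α} (hu : u.length < n) :
    margL n P L u = ∑ a : α, margL n P L (u ++ [a]) :=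
  marg_eq_sum_marg_append (P := L.indicator P) hu

theorem margL_eq_zero_of_not_inPrefix {u : List α} (hu : ¬inPrefix L u) : margL n P L u = 0 :=
  sum_eq_zero fun _ _ => Set.indicator_of_notMem (fun hv => hu ⟨_, hv⟩) _

theorem margL_of_length_eq {u : List α} (hu : u.length = n) : margL n P L u = L.indicator P u := by
  have h0 : n - u.length = 0 := by omega
  unfold margL
  rw [h0]
  simp

theorem cond_nonneg (hP : ∀ w, 0 ≤ P w) (u : List α) (a : α) : 0 ≤ cond n P u a :=
  div_nonneg (marg_nonneg hP _) (marg_nonneg hP _)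

theorem efg_le_one (hP : ∀ w, 0 ≤ P w) (u : List α) : efg n P L u ≤ 1 :=
  div_le_one_of_le₀ (margL_le_marg hP u) (marg_nonneg hP u)

theorem efg_le_indicator_inPrefix (hP : ∀ w, 0 ≤ P w) (u : List α) :
    efg n P L u ≤ {t | inPrefix L t}.indicator (fun _ => 1) u := by
  by_cases hu : inPrefix L u
  · simpa [Set.indicator_of_mem (show u ∈ {t | inPrefix L t} from hu)] using efg_le_one hP u
  · simp [efg, margL_eq_zero_of_not_inPrefix hu, hu]

theorem efg_le_indicator_of_length_eq (hP : ∀ w, 0 ≤ P w) {u : List α} (hu : u.length = n) :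
    efg n P L u ≤ L.indicator (fun _ => 1) u := by
  by_cases huL : u ∈ L
  · simpa [huL] using efg_le_one hP u
  · simp [efg, margL_of_length_eq hu, huL]

theorem efg_eq_sum_cond_mul_efg {u : List α} (hu : u.length < n)
    (hpos : ∀ a, marg n P (u ++ [a]) ≠ 0) :
    efg n P L u = ∑ a : α, cond n P u a * efg n P L (u ++ [a]) := by
  rw [efg, margL_eq_sum_margL_append hu, sum_div]
  refine sum_congr rfl fun a _ => ?_
  rw [cond, efg, div_mul_div_comm, mul_comm, mul_div_mul_right _ _ (hpos a)]

theorem efg_le_ctildeAux (S : Finset (List α)) (hP : ∀ w, 0 ≤ P w)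
    (hmarg : ∀ u : List α, u.length ≤ n → 0 < marg n P u) :
    ∀ (k : ℕ) (u : List α), u.length + k = n → efg n P L u ≤ ctildeAux n P L S k u
  | 0, u, hu => efg_le_indicator_of_length_eq hP (by simpa using hu)
  | k + 1, u, hu => by
    rw [ctildeAux]
    split_ifs
    · have hlen (a : α) : (u ++ [a]).length ≤ n := by simp; omega
      rw [efg_eq_sum_cond_mul_efg (by omega) fun a => (hmarg _ (hlen a)).ne']
      gcongr with a
      · exact cond_nonneg hP u a
      · exact efg_le_ctildeAux S hP hmarg k (u ++ [a]) (by simp; omega)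
    · exact efg_le_indicator_inPrefix hP u

end

theorem stmt5_general {α : Type*} [Fintype α] (n : ℕ) (P : List α → ℝ) (L : Set (List α))
    (hP : ∀ w, 0 ≤ P w)
    (S : Finset (List α))
    (hmarg : ∀ u : List α, u.length ≤ n → 0 < marg n P u) :
    ∀ u : List α, u.length ≤ n → efg n P L u ≤ ctilde n P L S u :=
  fun u hu => efg_le_ctildeAux S hP hmarg (n - u.length) u (by omega)

/-- The ASAp approximation soundly overapproximates the expected future
grammaticality: `c̃_S(u) ≥ c(u)` for every prefix `u`. -/
theorem stmt5 {α : Type*} [Fintype α] (n : ℕ) (P : List α → ℝ) (L : Set (List α))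
    (hP : ∀ w, 0 ≤ P w) (hL : ∀ w ∈ L, w.length = n)
    (S : Finset (List α)) (hS : ↑S ⊆ L)
    (hmarg : ∀ u : List α, u.length ≤ n → 0 < marg n P u) :
    ∀ u : List α, u.length ≤ n → efg n P L u ≤ ctilde n P L S u :=
  stmt5_general n P L hP S hmarg

end GAD
end

section
/- The GCD distribution stochastically over-weights 'trap' prefixes: in the setting where P is a product measure and L is such that a prefix u ∈ L_prefix has exactly one completion in L, the GCD probability of producing that unique completion given prefix u equals 1, while its grammar-aligned conditional probability Q(completion | u) also equals 1; however the probability Q̃_GCD(u) of reaching the prefix u satisfies Q̃_GCD(u)/Q(u) = c(empty)/c'(u) where c'(u) denotes the product over j ≤ |u| of the GCD normalizers; in the concrete binary example (uniform P on {0,1}^5, L = {00000} ∪ 1·{0,1}^4, u = '0'), this ratio equals 8.5, i.e., GCD reaches the trap prefix 8.5 times more often than the aligned distribution does. -/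
/-
Under GCD the first symbol is 0 or 1 with probability 1/2 each, since both are viable
prefixes. After a 0 the only viable continuation is 00000, so every later GCD step is forced
and GCD reaches the trap prefix 0 with probability 1/2. The aligned distribution gives 0 the
mass P(00000) / P(L) = (1/32) / (17/32) = 1/17, as L has the 17 elements 00000 and 1·{0,1}⁴.
-/

open scoped BigOperators
open Finset Filter

namespace GAD

/-- The GCD sampling distribution: conditionals reweighted by the prefix-language indicator. -/
noncomputable def QGCD {α : Type*} [Fintype α] (n : ℕ) (P : List α → ℝ) (L : Set (List α))
    (w : Fin n → α) : ℝ :=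
  ∏ i : Fin n,
    cond n P ((List.ofFn w).take i) (w i) *
        Set.indicator {t | inPrefix L t} (fun _ => (1 : ℝ)) ((List.ofFn w).take i ++ [w i]) /
      ∑ a : α, cond n P ((List.ofFn w).take i) a *
        Set.indicator {t | inPrefix L t} (fun _ => (1 : ℝ)) ((List.ofFn w).take i ++ [a])

/-- Uniform (i.i.d. Bernoulli(1/2)) distribution on binary strings of length 5. -/
noncomputable def P10 : List Bool → ℝ := fun w => if w.length = 5 then (1 : ℝ) / 32 else 0

/-- The language `{00000} ∪ 1·{0,1}⁴` (false = 0, true = 1). -/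
def L10 : Set (List Bool) :=
  {w | w = [false, false, false, false, false] ∨ (w.length = 5 ∧ w.head? = some true)}

theorem length_append_ofFn {α : Type*} {n : ℕ} {u : List α} (hu : u.length ≤ n)
    (v : Fin (n - u.length) → α) :
    (u ++ List.ofFn v).length = n := by
  simp; omega

section Uniform

variable {α : Type*} [Fintype α] {n : ℕ} {p : ℝ}

theorem marg_uniform {u : List α} (hu : u.length ≤ n) :
    marg n (fun w => if w.length = n then p else 0) u = Fintype.card α ^ (n - u.length) * p := by
  simp [marg, length_append_ofFn hu]

theorem cond_uniform [Nonempty α] (hp : p ≠ 0) {u : List α} (hu : u.length < n) (a : α) :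
    cond n (fun w => if w.length = n then p else 0) u a = (Fintype.card α : ℝ)⁻¹ := by
  have hsucc : n - u.length = n - (u ++ [a]).length + 1 := by simp; omega
  rw [cond, marg_uniform (by simp; omega), marg_uniform hu.le, hsucc, pow_succ]
  field_simp

theorem margL_uniform (L : Set (List α)) [DecidablePred (· ∈ L)] {u : List α}
    (hu : u.length ≤ n) :
    margL n (fun w => if w.length = n then p else 0) L u =
      #{v : Fin (n - u.length) → α | u ++ List.ofFn v ∈ L} * p := by
  simp [margL, Set.indicator_apply, length_append_ofFn hu, Finset.sum_ite]

theorem QGCD_uniform [Nonempty α] (hp : p ≠ 0) (L : Set (List α)) (w : Fin n → α) :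
    QGCD n (fun w => if w.length = n then p else 0) L w =
      ∏ i : Fin n,
        Set.indicator {t | inPrefix L t} (fun _ => (1 : ℝ)) ((List.ofFn w).take i ++ [w i]) /
          ∑ a : α, Set.indicator {t | inPrefix L t} (fun _ => (1 : ℝ))
            ((List.ofFn w).take i ++ [a]) := by
  refine Finset.prod_congr rfl fun i _ => ?_
  have hi : ((List.ofFn w).take i).length < n := by simp
  simp only [cond_uniform hp hi, ← Finset.mul_sum]
  exact mul_div_mul_left _ _ (by positivity)

end Uniform

theorem QGCD_eq_zero_of_not_inPrefix {α : Type*} [Fintype α] {n : ℕ} (P : List α → ℝ)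
    {L : Set (List α)} {w : Fin n → α} {i : Fin n}
    (h : ¬ inPrefix L ((List.ofFn w).take i ++ [w i])) : QGCD n P L w = 0 :=
  Finset.prod_eq_zero (Finset.mem_univ i) (by simp [Set.indicator_of_notMem, h])

instance : DecidablePred (· ∈ L10) := fun w =>
  inferInstanceAs (Decidable (w = _ ∨ (w.length = 5 ∧ w.head? = some true)))

theorem P10_eq : P10 = fun w => if w.length = 5 then 1 / 32 else 0 := rfl

theorem inPrefix_L10_replicate_false {k : ℕ} (hk : k ≤ 5) :
    inPrefix L10 (List.replicate k false) :=
  ⟨List.replicate (5 - k) false, Or.inl (by rw [← List.replicate_add, Nat.add_sub_cancel' hk]; rfl)⟩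

theorem inPrefix_L10_true : inPrefix L10 [true] :=
  ⟨[false, false, false, false], Or.inr ⟨rfl, rfl⟩⟩

theorem not_inPrefix_L10 {u : List Bool} (h0 : u.head? = some false) (ht : true ∈ u) :
    ¬ inPrefix L10 u := by
  rintro ⟨v, hv | ⟨-, hh⟩⟩
  · simpa [hv] using List.mem_append_left v ht
  · cases u <;> simp_all

theorem QGCD_L10_const_false : QGCD 5 P10 L10 (fun _ => false) = 1 / 2 := by
  have htake (i : Fin 5) :
      (List.ofFn fun _ : Fin 5 => false).take i = List.replicate i false := by
    rw [List.ofFn_const, List.take_replicate, min_eq_left i.isLt.le]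
  have hfalse (i : Fin 5) : List.replicate i false ++ [false] ∈ {t | inPrefix L10 t} := by
    rw [← List.replicate_succ']
    exact inPrefix_L10_replicate_false i.isLt
  have htrue (i : Fin 4) : List.replicate i.succ false ++ [true] ∉ {t | inPrefix L10 t} :=
    not_inPrefix_L10 (by simp [List.replicate_succ]) (by simp)
  rw [P10_eq, QGCD_uniform (by norm_num), Fin.prod_univ_succ]
  simp only [htake, Fintype.sum_bool, Set.indicator_of_mem (hfalse _),
    Set.indicator_of_notMem (htrue _)]
  rw [Fin.val_zero, List.replicate_zero, List.nil_append,
    Set.indicator_of_mem (show [true] ∈ {t | inPrefix L10 t} from inPrefix_L10_true)]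
  norm_num

theorem sum_QGCD_L10_head_false :
    (∑ w : Fin 5 → Bool, if w 0 = false then QGCD 5 P10 L10 w else 0) = 1 / 2 := by
  rw [Finset.sum_eq_single (fun _ => false), if_pos rfl, QGCD_L10_const_false]
  · intro w _ hw
    split_ifs with h0
    · obtain ⟨i, hi⟩ : ∃ i, w i = true := by
        by_contra! hc
        exact hw (funext fun i => by simpa using hc i)
      refine QGCD_eq_zero_of_not_inPrefix P10 (i := i) (not_inPrefix_L10 ?_ ?_)
      · cases i using Fin.cases with
        | zero => simp_all
        | succ j => simp [List.ofFn_succ, h0]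
      · simp [hi]
    · rfl
  · simp

theorem margL_L10_false : margL 5 P10 L10 [false] = 1 / 32 := by
  rw [P10_eq, margL_uniform L10 (by simp)]
  have : #{v : Fin (5 - [false].length) → Bool | [false] ++ List.ofFn v ∈ L10} = 1 := by decide
  rw [this]; norm_num

theorem PL_L10 : PL 5 P10 L10 = 17 / 32 := by
  rw [PL, P10_eq, margL_uniform L10 (by simp)]
  have : #{v : Fin (5 - ([] : List Bool).length) → Bool | [] ++ List.ofFn v ∈ L10} = 17 := by
    decide
  rw [this]; norm_num

theorem indicator_L10_P10_const_false :
    L10.indicator P10 (List.ofFn (fun _ => false : Fin 5 → Bool)) = 1 / 32 := by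
  rw [Set.indicator_of_mem (by decide)]; rfl

/-- GCD over-weights the trap prefix: in the uniform binary example with
`L = {00000} ∪ 1·{0,1}^4` and trap prefix `u = 0`, both GCD and the aligned distribution
produce the unique completion `00000` of `u` with conditional probability 1, but GCD reaches
`u` with probability `1/2` while the aligned distribution reaches it with probability `1/17`,
a ratio of `8.5`. -/
theorem stmt17 :
    QGCD 5 P10 L10 (fun _ => false) /
        (∑ w : Fin 5 → Bool, if w 0 = false then QGCD 5 P10 L10 w else 0) = 1 ∧
    (L10.indicator P10 (List.ofFn (fun _ => false : Fin 5 → Bool)) / PL 5 P10 L10) /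
        (margL 5 P10 L10 [false] / PL 5 P10 L10) = 1 ∧
    (∑ w : Fin 5 → Bool, if w 0 = false then QGCD 5 P10 L10 w else 0) = 1 / 2 ∧
    margL 5 P10 L10 [false] / PL 5 P10 L10 = 1 / 17 ∧
    (∑ w : Fin 5 → Bool, if w 0 = false then QGCD 5 P10 L10 w else 0) /
        (margL 5 P10 L10 [false] / PL 5 P10 L10) = 17 / 2 := by
  rw [sum_QGCD_L10_head_false, QGCD_L10_const_false, PL_L10, margL_L10_false,
    indicator_L10_P10_const_false]
  norm_num

end GAD
end
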